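/- arXiv:2407.08058 — 2 statements merged into one kernel-verified Lean document; each statement's English description precedes it below -/
import Mathlib

section
/- Let K₁ be a symmetric positive definite real p×p matrix, b ∈ ℝᵖ, f(β) = ⟨K₁β, β⟩ − 2⟨b, β⟩, β̂ = K₁⁻¹b, and t̂ = Σⱼ|β̂ⱼ|. Let 0 < t₂ < t₁ < t̂ and let σ ∈ {−1, 1}ᵖ. Suppose β*₁ is a minimizer of f over B₁(t₁) and β*₂ is a minimizer of f over B₁(t₂), and that both β*₁ and β*₂ have strict sign pattern σ (i.e., σⱼ·(β*ᵢ)ⱼ > 0 for all j and i = 1, 2). Then there exists μ ≥ 1 such that β*₂ − β̂ = μ·(β*₁ − β̂); that is, all lasso solutions with the same strict sign pattern (lying in the interior of the same orthant) lie on one segment of a ray with initial point β̂. -/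
open Finset Matrix

lemma symmdot_aux {p : ℕ} {K : Matrix (Fin p) (Fin p) ℝ} (hs : K.IsSymm)
    (x y : Fin p → ℝ) : (K *ᵥ x) ⬝ᵥ y = (K *ᵥ y) ⬝ᵥ x := by
  rw [dotProduct_comm, dotProduct_mulVec, ← mulVec_transpose, hs.eq]

lemma expand_aux {p : ℕ} {K : Matrix (Fin p) (Fin p) ℝ} (hs : K.IsSymm)
    (b β d : Fin p → ℝ) (ε : ℝ) :
    (K *ᵥ (β + ε • d)) ⬝ᵥ (β + ε • d) - 2 * (b ⬝ᵥ (β + ε • d)) =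
      ((K *ᵥ β) ⬝ᵥ β - 2 * (b ⬝ᵥ β)) + 2 * ε * ((K *ᵥ β - b) ⬝ᵥ d)
        + ε ^ 2 * ((K *ᵥ d) ⬝ᵥ d) := by
  have h := symmdot_aux hs d β
  simp only [mulVec_add, mulVec_smul, add_dotProduct, dotProduct_add, smul_dotProduct,
    dotProduct_smul, sub_dotProduct, smul_eq_mul, h]
  ring

lemma stationary_aux {p : ℕ} (hp : 1 ≤ p) {K : Matrix (Fin p) (Fin p) ℝ} (hs : K.IsSymm)
    (hpos : ∀ v : Fin p → ℝ, v ≠ 0 → 0 < (K *ᵥ v) ⬝ᵥ v)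
    (b σ : Fin p → ℝ) (hσ : ∀ j, σ j = 1 ∨ σ j = -1) (t : ℝ)
    (β : Fin p → ℝ) (hmem : ∑ j, |β j| ≤ t)
    (hmin : ∀ β' : Fin p → ℝ, ∑ j, |β' j| ≤ t →
      (K *ᵥ β) ⬝ᵥ β - 2 * (b ⬝ᵥ β) ≤ (K *ᵥ β') ⬝ᵥ β' - 2 * (b ⬝ᵥ β'))
    (hsign : ∀ j, 0 < σ j * β j) :
    ∃ l : ℝ, 0 ≤ l ∧ K *ᵥ β - b = (-l) • σ := by
  have hσabs : ∀ j, |σ j| = 1 := fun j => by rcases hσ j with h | h <;> simp [h]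
  have hβabs : ∀ j, |β j| = σ j * β j := by
    intro j
    rcases hσ j with h | h
    · have h2 := hsign j
      rw [h, one_mul] at h2 ⊢
      exact abs_of_pos h2
    · have h2 := hsign j
      rw [h] at h2 ⊢
      rw [abs_of_neg (by linarith), neg_one_mul]
  have hβpos : ∀ j, 0 < |β j| := fun j => by rw [hβabs j]; exact hsign j
  have hdir : ∀ d : Fin p → ℝ, σ ⬝ᵥ d ≤ 0 → 0 ≤ (K *ᵥ β - b) ⬝ᵥ d := by
    intro d hd
    have hne : (univ : Finset (Fin p)).Nonempty := ⟨⟨0, hp⟩, mem_univ _⟩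
    set ε₀ := univ.inf' hne (fun j => |β j| / (|d j| + 1)) with hε₀def
    have hε₀pos : 0 < ε₀ := by
      rw [hε₀def, Finset.lt_inf'_iff]
      intro j _
      have := hβpos j
      have h2 : (0:ℝ) ≤ |d j| := abs_nonneg _
      positivity
    have hε₀le : ∀ j, ε₀ * |d j| < |β j| := by
      intro j
      have h1 : ε₀ ≤ |β j| / (|d j| + 1) := Finset.inf'_le _ (mem_univ j)
      have h3 : (0:ℝ) < |d j| + 1 := by have := abs_nonneg (d j); linarith
      have h4 : ε₀ * (|d j| + 1) ≤ |β j| := by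
        calc ε₀ * (|d j| + 1) ≤ (|β j| / (|d j| + 1)) * (|d j| + 1) :=
              mul_le_mul_of_nonneg_right h1 h3.le
          _ = |β j| := div_mul_cancel₀ _ h3.ne'
      nlinarith
    have feasible : ∀ ε : ℝ, 0 < ε → ε ≤ ε₀ → ∑ j, |(β + ε • d) j| ≤ t := by
      intro ε hε1 hε2
      have key : ∀ j, |(β + ε • d) j| = σ j * β j + ε * (σ j * d j) := by
        intro j
        have h5 : -|d j| ≤ σ j * d j := by
          have h6 := neg_abs_le (σ j * d j)
          rwa [abs_mul, hσabs j, one_mul] at h6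
        have h6 : ε * |d j| ≤ ε₀ * |d j| := mul_le_mul_of_nonneg_right hε2 (abs_nonneg _)
        have h7 := hε₀le j
        have h8 := hsign j
        have h9 := hβabs j
        have hb : 0 < σ j * (β j + ε * d j) := by nlinarith
        have h10 : |β j + ε * d j| = σ j * (β j + ε * d j) := by
          rw [← abs_of_pos hb, abs_mul, hσabs j, one_mul]
        have h11 : (β + ε • d) j = β j + ε * d j := rfl
        rw [h11, h10]; ring
      calc ∑ j, |(β + ε • d) j| = ∑ j, (σ j * β j + ε * (σ j * d j)) := by
            exact Finset.sum_congr rfl fun j _ => key j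
        _ = (∑ j, σ j * β j) + ε * ∑ j, σ j * d j := by
            rw [Finset.sum_add_distrib, Finset.mul_sum]
        _ = (∑ j, |β j|) + ε * (σ ⬝ᵥ d) := by
            rw [Finset.sum_congr rfl fun j _ => (hβabs j).symm]; rfl
        _ ≤ t + 0 := add_le_add hmem (mul_nonpos_of_nonneg_of_nonpos hε1.le hd)
        _ = t := add_zero t
    by_contra hcon
    push_neg at hcon
    set gd := (K *ᵥ β - b) ⬝ᵥ d with hgd
    set Q := (K *ᵥ d) ⬝ᵥ d with hQdef
    have hQ : 0 ≤ Q := by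
      by_cases hd0 : d = 0
      · simp [hQdef, hd0]
      · exact (hpos d hd0).le
    have hQ1 : (0:ℝ) < Q + 1 := by linarith
    set ε := min ε₀ (-gd / (Q + 1)) with hεdef
    have hεpos : 0 < ε := lt_min hε₀pos (div_pos (by linarith) hQ1)
    have hfeas := feasible ε hεpos (min_le_left _ _)
    have hle := hmin _ hfeas
    rw [expand_aux hs b β d ε] at hle
    have h10 : 0 ≤ 2 * ε * gd + ε ^ 2 * Q := by linarith
    have h11 : ε ≤ -gd / (Q + 1) := min_le_right _ _
    have h12 : ε * (Q + 1) ≤ -gd := (le_div_iff₀ hQ1).mp h11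
    rw [mul_add, mul_one] at h12
    have h13 : 2 * gd + ε * Q < 0 := by linarith
    nlinarith [mul_pos hεpos (neg_pos.mpr h13)]
  have hσσ : (0:ℝ) < σ ⬝ᵥ σ := by
    have h1 : ∀ j : Fin p, σ j * σ j = 1 := fun j => by
      rcases hσ j with h | h <;> rw [h] <;> norm_num
    have h2 : σ ⬝ᵥ σ = (p : ℝ) := by
      simp only [dotProduct, h1, Finset.sum_const, Finset.card_univ, Fintype.card_fin,
        nsmul_eq_mul, mul_one]
    rw [h2]
    exact_mod_cast Nat.lt_of_lt_of_le Nat.zero_lt_one hp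
  set g := K *ᵥ β - b with hgdef
  set l := -(g ⬝ᵥ σ) / (σ ⬝ᵥ σ) with hldef
  have hl0 : 0 ≤ l := by
    have h1 := hdir (-σ) (by rw [dotProduct_neg]; linarith)
    rw [dotProduct_neg] at h1
    exact div_nonneg (by linarith) hσσ.le
  refine ⟨l, hl0, ?_⟩
  set h := g + l • σ with hhdef
  have hσh : σ ⬝ᵥ h = 0 := by
    rw [hhdef, dotProduct_add, dotProduct_smul, smul_eq_mul, hldef,
      div_mul_cancel₀ _ hσσ.ne', dotProduct_comm]
    ring
  have h1 := hdir h (le_of_eq hσh)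
  have h2 := hdir (-h) (by rw [dotProduct_neg, hσh, neg_zero])
  rw [dotProduct_neg] at h2
  have hgh : g ⬝ᵥ h = 0 := le_antisymm (by linarith) h1
  have hσh' : σ ⬝ᵥ h = 0 := hσh
  have hhh : h ⬝ᵥ h = 0 := by
    rw [hhdef, add_dotProduct, smul_dotProduct, smul_eq_mul, ← hhdef, hgh, hσh', mul_zero,
      add_zero]
  have hh0 : h = 0 := dotProduct_self_eq_zero.mp hhh
  have : g + l • σ = 0 := hh0
  rw [hgdef] at this
  rw [neg_smul]
  linear_combination (norm := module) this

/-- lasso solutions (at levels `0 < t₂ < t₁ < t̂`) with the same strict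
sign pattern lie on one segment of a ray with initial point `β̂ = K₁⁻¹b`: there exists
`μ ≥ 1` such that `β*₂ − β̂ = μ·(β*₁ − β̂)`. -/
theorem stmt_12 (p : ℕ) (hp : 1 ≤ p)
    (K₁ : Matrix (Fin p) (Fin p) ℝ) (hsymm : K₁.IsSymm)
    (hpos : ∀ v : Fin p → ℝ, v ≠ 0 → 0 < (K₁ *ᵥ v) ⬝ᵥ v)
    (b : Fin p → ℝ)
    (σ : Fin p → ℝ) (hσ : ∀ j, σ j = 1 ∨ σ j = -1)
    (t₁ t₂ : ℝ) (ht₂ : 0 < t₂) (h21 : t₂ < t₁)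
    (hthat : t₁ < ∑ j, |(K₁⁻¹ *ᵥ b) j|)
    (β₁ β₂ : Fin p → ℝ)
    (hmem₁ : ∑ j, |β₁ j| ≤ t₁)
    (hmin₁ : ∀ β : Fin p → ℝ, ∑ j, |β j| ≤ t₁ →
      (K₁ *ᵥ β₁) ⬝ᵥ β₁ - 2 * (b ⬝ᵥ β₁) ≤ (K₁ *ᵥ β) ⬝ᵥ β - 2 * (b ⬝ᵥ β))
    (hmem₂ : ∑ j, |β₂ j| ≤ t₂)
    (hmin₂ : ∀ β : Fin p → ℝ, ∑ j, |β j| ≤ t₂ →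
      (K₁ *ᵥ β₂) ⬝ᵥ β₂ - 2 * (b ⬝ᵥ β₂) ≤ (K₁ *ᵥ β) ⬝ᵥ β - 2 * (b ⬝ᵥ β))
    (hsign₁ : ∀ j, 0 < σ j * β₁ j)
    (hsign₂ : ∀ j, 0 < σ j * β₂ j) :
    ∃ μ : ℝ, 1 ≤ μ ∧ β₂ - K₁⁻¹ *ᵥ b = μ • (β₁ - K₁⁻¹ *ᵥ b) := by
  have hinj : Function.Injective (K₁.mulVec) := by
    intro x y hxy
    by_contra hne
    have hd : x - y ≠ 0 := sub_ne_zero.mpr hne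
    have h1 := hpos (x - y) hd
    rw [mulVec_sub, hxy, sub_self, zero_dotProduct] at h1
    exact lt_irrefl 0 h1
  have hunit : IsUnit K₁ := mulVec_injective_iff_isUnit.mp hinj
  have hdet : IsUnit K₁.det := (isUnit_iff_isUnit_det _).mp hunit
  set βh := K₁⁻¹ *ᵥ b with hβh
  have hKβh : K₁ *ᵥ βh = b := by
    rw [hβh, mulVec_mulVec, mul_nonsing_inv _ hdet, one_mulVec]
  obtain ⟨l₁, hl₁0, hg₁⟩ := stationary_aux hp hsymm hpos b σ hσ t₁ β₁ hmem₁ hmin₁ hsign₁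
  obtain ⟨l₂, hl₂0, hg₂⟩ := stationary_aux hp hsymm hpos b σ hσ t₂ β₂ hmem₂ hmin₂ hsign₂
  set w := K₁⁻¹ *ᵥ σ with hw
  have hKw : K₁ *ᵥ w = σ := by
    rw [hw, mulVec_mulVec, mul_nonsing_inv _ hdet, one_mulVec]
  have hrep : ∀ (β' : Fin p → ℝ) (l : ℝ), K₁ *ᵥ β' - b = (-l) • σ → β' = βh - l • w := by
    intro β' l hrel
    apply hinj
    rw [mulVec_sub, mulVec_smul, hKβh, hKw]
    have h1 : K₁ *ᵥ β' = (-l) • σ + b := sub_eq_iff_eq_add.mp hrel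
    rw [h1]
    module
  have hb₁ := hrep β₁ l₁ hg₁
  have hb₂ := hrep β₂ l₂ hg₂
  have hσ0 : σ ≠ 0 := by
    intro hz
    rcases hσ ⟨0, hp⟩ with h | h <;> rw [hz] at h <;> simp at h
  have hw0 : w ≠ 0 := by
    intro hz
    apply hσ0
    rw [← hKw, hz, mulVec_zero]
  have hQ : 0 < (K₁ *ᵥ w) ⬝ᵥ w := hpos w hw0
  have hl₁pos : 0 < l₁ := by
    rcases hl₁0.lt_or_eq with hlt | heq
    · exact hlt
    · exfalso
      rw [← heq, zero_smul, sub_zero] at hb₁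
      rw [hb₁] at hmem₁
      exact absurd hmem₁ (not_le.mpr hthat)
  have hfval : ∀ l : ℝ, (K₁ *ᵥ (βh - l • w)) ⬝ᵥ (βh - l • w) - 2 * (b ⬝ᵥ (βh - l • w))
      = ((K₁ *ᵥ βh) ⬝ᵥ βh - 2 * (b ⬝ᵥ βh)) + l ^ 2 * ((K₁ *ᵥ w) ⬝ᵥ w) := by
    intro l
    have h := expand_aux hsymm b βh w (-l)
    rw [show βh + (-l) • w = βh - l • w by module] at h
    rw [h, hKβh, sub_self, zero_dotProduct]
    ring
  have hcomp := hmin₁ β₂ (le_trans hmem₂ h21.le)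
  rw [hb₁, hb₂, hfval l₁, hfval l₂] at hcomp
  have hsq : l₁ ^ 2 ≤ l₂ ^ 2 := by nlinarith
  have hl12 : l₁ ≤ l₂ := by nlinarith
  refine ⟨l₂ / l₁, (one_le_div hl₁pos).mpr hl12, ?_⟩
  rw [hb₁, hb₂]
  rw [show βh - l₂ • w - βh = (-l₂) • w by module,
    show βh - l₁ • w - βh = (-l₁) • w by module, smul_smul]
  congr 1
  field_simp
end

section
/- Let p = 4 and let K₁ be a symmetric positive definite real 4×4 matrix (not necessarily normalized), b ∈ ℝ⁴, f(β) = ⟨K₁β, β⟩ − 2⟨b, β⟩, and β̂ = K₁⁻¹b; assume β̂ᵢ > 0 for all i = 1, 2, 3, 4. For i, j ∈ {1,…,4} let K₁^{ij} denote the (i, j)-cofactor of K₁ (the (j, i) entry of the adjugate matrix of K₁). Suppose there exist 0 < t₃ < t₂ < t₁ and minimizers of f over B₁(t₁), B₁(t₂), B₁(t₃) having strict sign patterns (+1, +1, +1, +1), (−1, +1, +1, +1), and (−1, −1, +1, +1) respectively (i.e., the lasso solution passes subsequently over the two faces β₁ = 0 and β₂ = 0). Then the following inequalities hold: K₁^{11}+K₁^{12}+K₁^{13}+K₁^{14}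 > 0, −K₁^{11}+K₁^{12}+K₁^{13}+K₁^{14} > 0, −K₁^{12}+K₁^{22}+K₁^{23}+K₁^{24} > 0, −K₁^{12}−K₁^{22}+K₁^{23}+K₁^{24} > 0, together with K₁^{11} > 0, K₁^{11}K₁^{22} − (K₁^{12})² > 0, and the 4×4 determinant of the matrix (K₁^{ij}) is positive. -/
open Finset Matrix

set_option maxHeartbeats 1000000


lemma dir_nonneg (K : Matrix (Fin 4) (Fin 4) ℝ) (hsymm : K.IsSymm) (b : Fin 4 → ℝ)
    (t : ℝ) (σ β : Fin 4 → ℝ) (hσ : ∀ j, |σ j| = 1)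
    (hmem : ∑ j, |β j| ≤ t)
    (hmin : ∀ β' : Fin 4 → ℝ, ∑ j, |β' j| ≤ t →
      (K *ᵥ β) ⬝ᵥ β - 2 * (b ⬝ᵥ β) ≤ (K *ᵥ β') ⬝ᵥ β' - 2 * (b ⬝ᵥ β'))
    (hsign : ∀ j, 0 < σ j * β j)
    (v : Fin 4 → ℝ) (hv : σ ⬝ᵥ v ≤ 0) :
    0 ≤ (K *ᵥ β - b) ⬝ᵥ v := by
  have hKsym : ∀ x y : Fin 4 → ℝ, (K *ᵥ x) ⬝ᵥ y = (K *ᵥ y) ⬝ᵥ x := by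
    intro x y
    rw [dotProduct_comm, Matrix.dotProduct_mulVec, ← Matrix.mulVec_transpose, hsymm.eq]
  set A : ℝ := (K *ᵥ β - b) ⬝ᵥ v with hA
  set B : ℝ := (K *ᵥ v) ⬝ᵥ v with hB
  -- a positive step size that keeps signs
  set m : ℝ := Finset.univ.inf' ⟨0, Finset.mem_univ 0⟩ (fun j => σ j * β j) with hm
  set M : ℝ := Finset.univ.sup' ⟨0, Finset.mem_univ 0⟩ (fun j => |v j|) with hM
  have hmpos : 0 < m := by
    rw [hm]; apply (Finset.lt_inf'_iff _).2
    exact fun j _ => hsign j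
  have hMnn : 0 ≤ M := le_trans (abs_nonneg (v 0)) (Finset.le_sup' (fun j => |v j|) (Finset.mem_univ (0 : Fin 4)))
  have key : ∀ ε : ℝ, 0 < ε → ε * (M + 1) ≤ m → 0 ≤ 2 * ε * A + ε ^ 2 * B := by
    intro ε hε hεm
    have hsign' : ∀ j, 0 < σ j * (β j + ε * v j) := by
      intro j
      have h1 : m ≤ σ j * β j := Finset.inf'_le _ (Finset.mem_univ j)
      have h2 : |v j| ≤ M := hM ▸ Finset.le_sup' (fun j => |v j|) (Finset.mem_univ j)
      have h3 : -(ε * |v j|) ≤ ε * (σ j * v j) := by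
        have : |σ j * v j| = |v j| := by rw [abs_mul, hσ j, one_mul]
        nlinarith [neg_abs_le (σ j * v j)]
      nlinarith
    have habs : ∀ j, |β j + ε * v j| = σ j * (β j + ε * v j) := by
      intro j
      have := hsign' j
      have h4 : |σ j * (β j + ε * v j)| = σ j * (β j + ε * v j) := abs_of_pos this
      rw [← h4, abs_mul, hσ j, one_mul]
    have habs0 : ∀ j, |β j| = σ j * β j := by
      intro j
      have h4 : |σ j * β j| = σ j * β j := abs_of_pos (hsign j)
      rw [← h4, abs_mul, hσ j, one_mul]
    have hmem' : ∑ j, |β j + ε * v j| ≤ t := by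
      have e1 : ∑ j, |β j + ε * v j| = (∑ j, |β j|) + ε * (σ ⬝ᵥ v) := by
        simp only [habs, habs0, dotProduct, Finset.mul_sum, ← Finset.sum_add_distrib]
        congr 1; funext j; ring
      have : ε * (σ ⬝ᵥ v) ≤ 0 := mul_nonpos_of_nonneg_of_nonpos hε.le hv
      linarith
    have hmin' := hmin (β + ε • v) (by simpa [Pi.add_apply, Pi.smul_apply, smul_eq_mul] using hmem')
    have hexp : (K *ᵥ (β + ε • v)) ⬝ᵥ (β + ε • v) - 2 * (b ⬝ᵥ (β + ε • v))
        = ((K *ᵥ β) ⬝ᵥ β - 2 * (b ⬝ᵥ β)) + 2 * ε * A + ε ^ 2 * B := by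
      rw [Matrix.mulVec_add, Matrix.mulVec_smul]
      simp only [dotProduct_add, add_dotProduct, smul_dotProduct, dotProduct_smul,
        smul_eq_mul, hA, hB, sub_dotProduct]
      rw [hKsym v β]
      ring
    rw [hexp] at hmin'
    linarith
  by_contra hneg
  push_neg at hneg
  set ε : ℝ := min (m / (M + 1)) (-A / (|B| + 1)) with hε
  have hε1 : 0 < m / (M + 1) := by positivity
  have hε2 : 0 < -A / (|B| + 1) := by
    apply div_pos (by linarith) (by positivity)
  have hεpos : 0 < ε := lt_min hε1 hε2
  have hεm : ε * (M + 1) ≤ m := by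
    have : ε ≤ m / (M + 1) := min_le_left _ _
    rw [le_div_iff₀ (by linarith)] at this
    exact this
  have hεA : ε * (|B| + 1) ≤ -A := by
    have : ε ≤ -A / (|B| + 1) := min_le_right _ _
    rw [le_div_iff₀ (by positivity)] at this
    exact this
  have h0 := key ε hεpos hεm
  have hεB : ε * B ≤ ε * |B| := by
    apply mul_le_mul_of_nonneg_left (le_abs_self B) hεpos.le
  nlinarith

lemma kkt (K : Matrix (Fin 4) (Fin 4) ℝ) (hsymm : K.IsSymm) (b : Fin 4 → ℝ)
    (t : ℝ) (σ β : Fin 4 → ℝ) (hσ : ∀ j, |σ j| = 1)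
    (hmem : ∑ j, |β j| ≤ t)
    (hmin : ∀ β' : Fin 4 → ℝ, ∑ j, |β' j| ≤ t →
      (K *ᵥ β) ⬝ᵥ β - 2 * (b ⬝ᵥ β) ≤ (K *ᵥ β') ⬝ᵥ β' - 2 * (b ⬝ᵥ β'))
    (hsign : ∀ j, 0 < σ j * β j) :
    ∃ c : ℝ, c ≤ 0 ∧ K *ᵥ β = b + c • σ := by
  set g : Fin 4 → ℝ := K *ᵥ β - b with hg
  have hσσ : σ ⬝ᵥ σ = (4 : ℝ) := by
    have h1 : ∀ j, σ j * σ j = 1 := by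
      intro j
      have := hσ j
      nlinarith [abs_nonneg (σ j), sq_abs (σ j)]
    simp [dotProduct, Fin.sum_univ_four, h1]
  set c : ℝ := (g ⬝ᵥ σ) / 4 with hc
  have hcle : c ≤ 0 := by
    have h := dir_nonneg K hsymm b t σ β hσ hmem hmin hsign (-σ)
      (by rw [dotProduct_neg, hσσ]; norm_num)
    rw [dotProduct_neg] at h
    rw [hc]
    have : g ⬝ᵥ σ ≤ 0 := by linarith
    linarith [div_nonpos_of_nonpos_of_nonneg this (by norm_num : (0:ℝ) ≤ 4)]
  refine ⟨c, hcle, ?_⟩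
  funext j
  have hveq : ∀ j, g j = c * σ j := by
    intro j
    have hzero : σ ⬝ᵥ (Pi.single j 1 - (σ j / 4) • σ) = 0 := by
      rw [dotProduct_sub, dotProduct_smul, hσσ, dotProduct_single, smul_eq_mul]
      ring
    have h1 := dir_nonneg K hsymm b t σ β hσ hmem hmin hsign _ (le_of_eq hzero)
    have h2 := dir_nonneg K hsymm b t σ β hσ hmem hmin hsign
      (-(Pi.single j 1 - (σ j / 4) • σ)) (by rw [dotProduct_neg, hzero]; norm_num)
    rw [dotProduct_neg] at h2
    have heq : g ⬝ᵥ (Pi.single j 1 - (σ j / 4) • σ) = g j - c * σ j := by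
      rw [dotProduct_sub, dotProduct_smul, dotProduct_single, smul_eq_mul, hc]
      ring
    rw [heq] at h1 h2
    linarith
  have := hveq j
  simp only [hg, Pi.sub_apply] at this
  simp only [Pi.add_apply, Pi.smul_apply, smul_eq_mul]
  linarith

lemma face (K : Matrix (Fin 4) (Fin 4) ℝ) (hsymm : K.IsSymm) (hdet : K.det ≠ 0)
    (b : Fin 4 → ℝ) (t : ℝ) (σ β : Fin 4 → ℝ) (hσ : ∀ j, |σ j| = 1)
    (hmem : ∑ j, |β j| ≤ t)
    (hmin : ∀ β' : Fin 4 → ℝ, ∑ j, |β' j| ≤ t →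
      (K *ᵥ β) ⬝ᵥ β - 2 * (b ⬝ᵥ β) ≤ (K *ᵥ β') ⬝ᵥ β' - 2 * (b ⬝ᵥ β'))
    (hsign : ∀ j, 0 < σ j * β j)
    (i : Fin 4) (hσi : σ i = -1) (hbh : 0 < (K⁻¹ *ᵥ b) i) :
    0 < (K⁻¹ *ᵥ σ) i := by
  obtain ⟨c, hc, heq⟩ := kkt K hsymm b t σ β hσ hmem hmin hsign
  have hβ : β = K⁻¹ *ᵥ b + c • (K⁻¹ *ᵥ σ) := by
    have h1 : K⁻¹ *ᵥ (K *ᵥ β) = β := by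
      rw [Matrix.mulVec_mulVec, Matrix.nonsing_inv_mul _ (Ne.isUnit hdet), Matrix.one_mulVec]
    rw [← h1, heq, Matrix.mulVec_add, Matrix.mulVec_smul]
  have hβi : β i < 0 := by
    have := hsign i
    rw [hσi] at this
    linarith
  rw [hβ] at hβi
  simp only [Pi.add_apply, Pi.smul_apply, smul_eq_mul] at hβi
  by_contra hle
  push_neg at hle
  nlinarith

/-- necessary conditions for the `p = 4` lasso solution path to pass
subsequently over the two faces `β₁ = 0` and `β₂ = 0` (sign patterns
`(+,+,+,+) → (−,+,+,+) → (−,−,+,+)`), expressed via the cofactors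
`K₁^{ij} = adj(K₁)ⱼᵢ` of the covariance matrix. -/
theorem stmt_19 (K₁ : Matrix (Fin 4) (Fin 4) ℝ) (hsymm : K₁.IsSymm)
    (hpos : ∀ v : Fin 4 → ℝ, v ≠ 0 → 0 < (K₁ *ᵥ v) ⬝ᵥ v)
    (b : Fin 4 → ℝ)
    (hβhat : ∀ i, 0 < (K₁⁻¹ *ᵥ b) i)
    (t₁ t₂ t₃ : ℝ) (ht₃ : 0 < t₃) (h32 : t₃ < t₂) (h21 : t₂ < t₁)
    (β₁ β₂ β₃ : Fin 4 → ℝ)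
    (hmem₁ : ∑ j, |β₁ j| ≤ t₁)
    (hmin₁ : ∀ β : Fin 4 → ℝ, ∑ j, |β j| ≤ t₁ →
      (K₁ *ᵥ β₁) ⬝ᵥ β₁ - 2 * (b ⬝ᵥ β₁) ≤ (K₁ *ᵥ β) ⬝ᵥ β - 2 * (b ⬝ᵥ β))
    (hsign₁ : ∀ j, 0 < (![(1 : ℝ), 1, 1, 1]) j * β₁ j)
    (hmem₂ : ∑ j, |β₂ j| ≤ t₂)
    (hmin₂ : ∀ β : Fin 4 → ℝ, ∑ j, |β j| ≤ t₂ →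
      (K₁ *ᵥ β₂) ⬝ᵥ β₂ - 2 * (b ⬝ᵥ β₂) ≤ (K₁ *ᵥ β) ⬝ᵥ β - 2 * (b ⬝ᵥ β))
    (hsign₂ : ∀ j, 0 < (![(-1 : ℝ), 1, 1, 1]) j * β₂ j)
    (hmem₃ : ∑ j, |β₃ j| ≤ t₃)
    (hmin₃ : ∀ β : Fin 4 → ℝ, ∑ j, |β j| ≤ t₃ →
      (K₁ *ᵥ β₃) ⬝ᵥ β₃ - 2 * (b ⬝ᵥ β₃) ≤ (K₁ *ᵥ β) ⬝ᵥ β - 2 * (b ⬝ᵥ β))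
    (hsign₃ : ∀ j, 0 < (![(-1 : ℝ), -1, 1, 1]) j * β₃ j) :
    let C : Fin 4 → Fin 4 → ℝ := fun i j => K₁.adjugate j i
    0 < C 0 0 + C 0 1 + C 0 2 + C 0 3 ∧
    0 < -C 0 0 + C 0 1 + C 0 2 + C 0 3 ∧
    0 < -C 0 1 + C 1 1 + C 1 2 + C 1 3 ∧
    0 < -C 0 1 - C 1 1 + C 1 2 + C 1 3 ∧
    0 < C 0 0 ∧
    0 < C 0 0 * C 1 1 - (C 0 1) ^ 2 ∧
    0 < (Matrix.of C).det := by
  intro C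
  have hherm : K₁.IsHermitian := by
    rwa [Matrix.IsHermitian, Matrix.conjTranspose_eq_transpose_of_trivial]
  have hpd : K₁.PosDef := .of_dotProduct_mulVec_pos hherm fun x hx => by
    simpa [star_trivial, dotProduct_comm] using hpos x hx
  have hd : 0 < K₁.det := hpd.det_pos
  set N := K₁⁻¹ with hN
  have hNpd : N.PosDef := hpd.inv
  have hq : ∀ x : Fin 4 → ℝ, x ≠ 0 → 0 < x ⬝ᵥ (N *ᵥ x) := fun x hx => by
    simpa [star_trivial] using hNpd.dotProduct_mulVec_pos hx
  have hNs : N.IsSymm := by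
    rw [Matrix.IsSymm, hN, Matrix.transpose_nonsing_inv, hsymm.eq]
  have hadj : ∀ i j, K₁.adjugate i j = K₁.det * N i j := by
    intro i j
    have h := Matrix.inv_def K₁
    have h2 : N i j = (K₁.det)⁻¹ * K₁.adjugate i j := by
      rw [hN, h, Ring.inverse_eq_inv]
      simp [Matrix.smul_apply]
    rw [h2]
    field_simp
  have h00 : 0 < N 0 0 := by
    have h := hq ![1, 0, 0, 0] (by
      intro h; have := congrFun h 0; simp at this)
    simpa [dotProduct, Matrix.mulVec, Fin.sum_univ_four] using h
  have h11 : 0 < N 1 1 := by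
    have h := hq ![0, 1, 0, 0] (by
      intro h; have := congrFun h 1; simp at this)
    simpa [dotProduct, Matrix.mulVec, Fin.sum_univ_four] using h
  have hminor : 0 < N 0 0 * N 1 1 - N 0 1 ^ 2 := by
    have h := hq ![-(N 0 1), N 0 0, 0, 0] (by
      intro h; have := congrFun h 1; simp at this; exact absurd this (ne_of_gt h00))
    simp only [dotProduct, Matrix.mulVec, Fin.sum_univ_four] at h
    simp at h
    have h10 : N 1 0 = N 0 1 := hNs.apply 0 1
    rw [h10] at h
    by_contra hcon
    push_neg at hcon
    nlinarith [mul_nonneg h00.le (by linarith : 0 ≤ N 0 1 ^ 2 - N 0 0 * N 1 1)]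
  have hσ2 : ∀ j, |(![(-1 : ℝ), 1, 1, 1]) j| = 1 := by
    intro j; fin_cases j <;> norm_num
  have hσ3 : ∀ j, |(![(-1 : ℝ), -1, 1, 1]) j| = 1 := by
    intro j; fin_cases j <;> norm_num
  have hP := face K₁ hsymm hd.ne' b t₂ ![(-1), 1, 1, 1] β₂ hσ2 hmem₂ hmin₂ hsign₂ 0
    (by norm_num) (hβhat 0)
  have hQ := face K₁ hsymm hd.ne' b t₃ ![(-1), -1, 1, 1] β₃ hσ3 hmem₃ hmin₃ hsign₃ 1
    (by norm_num) (hβhat 1)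
  rw [← hN] at hP hQ
  simp only [Matrix.mulVec, dotProduct, Fin.sum_univ_four, Matrix.cons_val_zero,
    Matrix.cons_val_one, Matrix.head_cons, Matrix.cons_val_two, Matrix.tail_cons,
    Matrix.cons_val_three, Matrix.head_fin_const] at hP hQ
  have h10 : N 1 0 = N 0 1 := hNs.apply 0 1
  have h20 : N 2 0 = N 0 2 := hNs.apply 0 2
  have h30 : N 3 0 = N 0 3 := hNs.apply 0 3
  have h21 : N 2 1 = N 1 2 := hNs.apply 1 2
  have h31 : N 3 1 = N 1 3 := hNs.apply 1 3
  have hdet_goal : 0 < (Matrix.of C).det := by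
    have hCeq : Matrix.of C = K₁.adjugateᵀ := by
      ext i j
      simp [C, Matrix.transpose_apply]
    rw [hCeq, Matrix.det_transpose, Matrix.det_adjugate]
    simp only [Fintype.card_fin]
    positivity
  rw [h10] at hQ
  refine ⟨?_, ?_, ?_, ?_, ?_, ?_, hdet_goal⟩ <;>
    simp only [C, hadj, h10, h21, h31] <;>
    nlinarith [hP, hQ, h00, h11, hminor, hd, mul_pos hd hP, mul_pos hd hQ,
      mul_pos hd h00, mul_pos hd h11, mul_pos (mul_pos hd hd) hminor]
end
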